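/- Suppose the districts have equal population, every district has margin δ > 0, 1/4 < β < 1/2, and the number m of majority-A districts satisfies 1 − m/n = 2β − 1/2 (the value that minimizes the efficiency gap). Then δ = 1/2, the efficiency gap |(1 − m/n) − (2β − 1/2)| equals 0, and the proportionality ratio ρ = (1 − m/n)/β equals 2 − 1/(2β). -/

import Mathlib

open Finset

/-!
With uniform margin `δ` every district's `A`-share is `(1 - δ)/2`, raised by `δ` in the `m`
majority-`A` districts, so `β = (1 + δ)/2 - δ t` with `t = m/n`. Substituting into
`1 - t = 2β - 1/2` gives `(1 - 2t)(1 - 2δ) = 0`, and `β < 1/2` forces `t > 1/2`, hence `δ = 1/2`.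
-/

lemma eq_add_ite_of_margin {a δ : ℝ} (hδ : 0 ≤ δ) (hmarg : a - (1 - a) = δ ∨ (1 - a) - a = δ) :
    a = (1 - δ) / 2 + if 1 / 2 < a then δ else 0 := by
  split_ifs with h <;> rcases hmarg with hm | hm <;> linarith

lemma sum_eq_of_margin {ι : Type*} [Fintype ι] {a : ι → ℝ} {δ : ℝ} (hδ : 0 ≤ δ)
    (hmarg : ∀ i, a i - (1 - a i) = δ ∨ (1 - a i) - a i = δ) :
    ∑ i, a i = Fintype.card ι * ((1 - δ) / 2) + δ * #{i | 1 / 2 < a i} := by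
  calc ∑ i, a i = ∑ i, ((1 - δ) / 2 + if 1 / 2 < a i then δ else 0) :=
        sum_congr rfl fun i _ => eq_add_ite_of_margin hδ (hmarg i)
    _ = Fintype.card ι * ((1 - δ) / 2) + δ * #{i | 1 / 2 < a i} := by
        rw [sum_add_distrib, sum_const, card_univ, nsmul_eq_mul, sum_ite, sum_const_zero,
          sum_const, nsmul_eq_mul, add_zero, mul_comm δ]

lemma one_sub_average_eq_of_margin {n : ℕ} (hn : 0 < n) {a : Fin n → ℝ} {δ : ℝ} (hδ : 0 ≤ δ)
    (hmarg : ∀ i, a i - (1 - a i) = δ ∨ (1 - a i) - a i = δ) :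
    1 - (∑ i, a i) / n = (1 + δ) / 2 - δ * (#{i | 1 / 2 < a i} / n) := by
  have hn' : (n : ℝ) ≠ 0 := by positivity
  rw [sum_eq_of_margin hδ hmarg, Fintype.card_fin]
  field_simp
  ring

lemma margin_eq_half_of_gap_eq_zero {β δ t : ℝ} (hδ : 0 < δ) (hβt : β = (1 + δ) / 2 - δ * t)
    (hβ : β < 1 / 2) (hgap : 1 - t = 2 * β - 1 / 2) : δ = 1 / 2 := by
  have ht : 1 / 2 - t < 0 := neg_of_mul_neg_right (by linarith : δ * (1 / 2 - t) < 0) hδ.le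
  have hprod : (1 - 2 * t) * (1 - 2 * δ) = 0 := by linear_combination 2 * hgap + 4 * hβt
  rcases mul_eq_zero.mp hprod with h | h <;> linarith

theorem min_efficiency_gap_consequences_large_beta_general
    (n : ℕ) (hn : 0 < n) (a : Fin n → ℝ)
    (δ : ℝ) (hδ : 0 < δ)
    (hmarg : ∀ i, a i - (1 - a i) = δ ∨ (1 - a i) - a i = δ)
    (m : ℕ) (hm : m = (univ.filter (fun i => 1/2 < a i)).card)
    (α β : ℝ) (hα : α = (∑ i, a i) / n) (hβ : β = 1 - α)
    (hβ1 : 1/4 < β) (hβ2 : β < 1/2)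
    (hgap : 1 - (m:ℝ)/n = 2*β - 1/2) :
    δ = 1/2 ∧
    |(1 - (m:ℝ)/n) - (2*β - 1/2)| = 0 ∧
    (1 - (m:ℝ)/n)/β = 2 - 1/(2*β) := by
  have hβt : β = (1 + δ) / 2 - δ * (m / n) := by
    rw [hβ, hα, hm]
    exact one_sub_average_eq_of_margin hn hδ.le hmarg
  have hβ0 : β ≠ 0 := by linarith
  refine ⟨margin_eq_half_of_gap_eq_zero hδ hβt hβ2 hgap, by rw [hgap, sub_self, abs_zero], ?_⟩
  rw [hgap]
  field_simp

/-- With equal-population districts each having margin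
`δ > 0`, `1/4 < β < 1/2`, and `1 − m/n = 2β − 1/2` (the efficiency-gap
minimizing seat allocation), one has `δ = 1/2`, a zero efficiency gap, and
proportionality ratio `ρ = 2 − 1/(2β)`. -/
theorem min_efficiency_gap_consequences_large_beta
    (n : ℕ) (hn : 0 < n) (a : Fin n → ℝ)
    (ha : ∀ i, a i ∈ Set.Icc (0:ℝ) 1)
    (δ : ℝ) (hδ : 0 < δ)
    (hmarg : ∀ i, a i - (1 - a i) = δ ∨ (1 - a i) - a i = δ)
    (m : ℕ) (hm : m = (univ.filter (fun i => 1/2 < a i)).card)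
    (α β : ℝ) (hα : α = (∑ i, a i) / n) (hβ : β = 1 - α)
    (hβ1 : 1/4 < β) (hβ2 : β < 1/2)
    (hgap : 1 - (m:ℝ)/n = 2*β - 1/2) :
    δ = 1/2 ∧
    |(1 - (m:ℝ)/n) - (2*β - 1/2)| = 0 ∧
    (1 - (m:ℝ)/n)/β = 2 - 1/(2*β) :=
  min_efficiency_gap_consequences_large_beta_general n hn a δ hδ hmarg m hm α β hα hβ hβ1 hβ2 hgap
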